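/- For the maximum-weight b-matching mechanisms M_BFS and M_DFS with a fixed agent processing order, the first agent's optimal strategy is to report exactly the edges to its b_1 highest-valued incident tasks: doing so guarantees agent a_1 receives precisely its top b_1 tasks (or all its tasks if it has fewer than b_1), which is the maximum utility a_1 can obtain under any report. -/

import Mathlib

open Classical

/-- An edge of the bipartite graph: a pair (agent, task). -/
abbrev Edge (n m : ℕ) := Fin n × Fin m

variable {n m : ℕ}

/-- Number of tasks assigned to agent `i` in the edge set `μ`. -/
def deg (μ : Finset (Edge n m)) (i : Fin n) : ℕ := (μ.filter (fun e => e.1 = i)).card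

/-- `μ` is a b-matching over the edge set `E'`: it uses only edges of `E'`, each agent `i`
receives at most `b i` tasks, and each task is matched to at most one agent. -/
def IsBMatching (b : Fin n → ℕ) (E' μ : Finset (Edge n m)) : Prop :=
  μ ⊆ E' ∧ (∀ i, deg μ i ≤ b i) ∧ ∀ j : Fin m, (μ.filter (fun e => e.2 = j)).card ≤ 1

/-- Weight of a matching: total value of matched tasks. -/
noncomputable def weight (q : Fin m → ℝ) (μ : Finset (Edge n m)) : ℝ := ∑ e ∈ μ, q e.2

/-- Utility of agent `i`: total value of the tasks matched to `i`. -/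
noncomputable def util (q : Fin m → ℝ) (i : Fin n) (μ : Finset (Edge n m)) : ℝ :=
  ∑ e ∈ μ.filter (fun e => e.1 = i), q e.2

/-- `μ` is a maximum vertex-weighted b-matching over the edge set `E'`. -/
def IsMaxMatching (b : Fin n → ℕ) (q : Fin m → ℝ) (E' μ : Finset (Edge n m)) : Prop :=
  IsBMatching b E' μ ∧ ∀ ν, IsBMatching b E' ν → weight q ν ≤ weight q μ

/-- The edges of `E` incident to agent `i`. -/
def agentEdges (E : Finset (Edge n m)) (i : Fin n) : Finset (Edge n m) :=
  E.filter (fun e => e.1 = i)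

/-- The edge set obtained from `E` when agent `i` reports `S` instead of its true edges. -/
def deviate (E : Finset (Edge n m)) (i : Fin n) (S : Finset (Edge n m)) : Finset (Edge n m) :=
  E.filter (fun e => e.1 ≠ i) ∪ S

/-- A valid report of agent `i`: a nonempty subset of its true incident edges. -/
def ValidReport (E : Finset (Edge n m)) (i : Fin n) (S : Finset (Edge n m)) : Prop :=
  S ⊆ agentEdges E i ∧ S.Nonempty
open Classical in
/-- The tasks sorted in non-increasing order of value (ties broken by index). -/
noncomputable def sortedTasks (m : ℕ) (q : Fin m → ℝ) : List (Fin m) :=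
  List.insertionSort (fun j k => q k ≤ q j) (List.finRange m)

/-- The greedy mechanism `M_AP`: process tasks in non-increasing value order, assigning each
task to the highest-priority unsaturated agent connected to it, if any. -/
noncomputable def MAP (b : Fin n → ℕ) (q : Fin m → ℝ) (E' : Finset (Edge n m)) :
    Finset (Edge n m) :=
  (sortedTasks m q).foldl (fun μ j =>
    match (List.finRange n).find? (fun i => decide ((i, j) ∈ E' ∧ deg μ i < b i)) with
    | some i => insert (i, j) μ
    | none => μ) ∅

/-- `p = [(i₁,j₁),…,(i_L,j_L)]` is an augmenting path from task `j = j₁` with respect to the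
matching `μ` in the graph `E'`: the edges `(i_ℓ, j_ℓ)` are non-matching edges of `E'`, the
edges `(i_ℓ, j_{ℓ+1})` are matching edges, all interior agents are saturated and the final
agent is unsaturated. -/
structure IsAugPathFrom (b : Fin n → ℕ) (E' μ : Finset (Edge n m)) (j : Fin m)
    (p : List (Edge n m)) : Prop where
  ne : p ≠ []
  starts : ∀ e ∈ p.head?, e.2 = j
  mem : ∀ e ∈ p, e ∈ E' ∧ e ∉ μ
  matched : ∀ k, (h : k + 1 < p.length) →
    ((p.get ⟨k, Nat.lt_of_succ_lt h⟩).1, (p.get ⟨k + 1, h⟩).2) ∈ μ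
  satInterior : ∀ k, (h : k + 1 < p.length) →
    b (p.get ⟨k, Nat.lt_of_succ_lt h⟩).1 ≤ deg μ (p.get ⟨k, Nat.lt_of_succ_lt h⟩).1
  unsatLast : ∀ e ∈ p.getLast?, deg μ e.1 < b e.1
  agentsNodup : (p.map Prod.fst).Nodup
  tasksNodup : (p.map Prod.snd).Nodup

/-- The matching edges of an augmenting path. -/
def pathMatched (p : List (Edge n m)) : List (Edge n m) :=
  (p.zip p.tail).map (fun ef => (ef.1.1, ef.2.2))

/-- Flip an augmenting path: remove its matching edges and add its non-matching edges. -/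
def applyPath (μ : Finset (Edge n m)) (p : List (Edge n m)) : Finset (Edge n m) :=
  (μ \ (pathMatched p).toFinset) ∪ p.toFinset

/-- A numeric key realizing the lexicographic order (by vertex indices) on augmenting paths. -/
def pathKey (n m : ℕ) (p : List (Edge n m)) : ℕ :=
  ((p.flatMap fun (e : Edge n m) => [e.1.val + 1, e.2.val + 1]) ++
    List.replicate (2 * n - 2 * p.length) 0).foldl (fun a d => a * (n + m + 2) + d) 0

/-- DFS explores agents in priority order and goes deep first: it returns the lexicographically
least augmenting path. -/
def dfsCost (n m : ℕ) (p : List (Edge n m)) : ℕ := pathKey n m p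

/-- BFS returns a shortest augmenting path, exploring vertices in priority order: it returns
the lexicographically least augmenting path among those of minimum length. -/
def bfsCost (n m : ℕ) (p : List (Edge n m)) : ℕ :=
  p.length * (n + m + 2) ^ (2 * n + 2) + pathKey n m p

/-- Select the cost-minimal augmenting path from task `j`, if an augmenting path exists. -/
noncomputable def selectPath (cost : List (Edge n m) → ℕ) (b : Fin n → ℕ)
    (E' μ : Finset (Edge n m)) (j : Fin m) : Option (List (Edge n m)) :=
  if h : ∃ p, IsAugPathFrom b E' μ j p ∧ ∀ p', IsAugPathFrom b E' μ j p' → cost p ≤ cost p'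
  then some h.choose else none

/-- The augmenting-path algorithm: process tasks in non-increasing value order, at each step
flipping the augmenting path found by the (deterministic) search given by `cost`. -/
noncomputable def runAug (cost : List (Edge n m) → ℕ) (b : Fin n → ℕ) (q : Fin m → ℝ)
    (E' : Finset (Edge n m)) : Finset (Edge n m) :=
  (sortedTasks m q).foldl (fun μ j =>
    match selectPath cost b E' μ j with
    | some p => applyPath μ p
    | none => μ) ∅

/-- The maximum vertex-weighted b-matching mechanism using breadth-first search. -/
noncomputable def MBFS (b : Fin n → ℕ) (q : Fin m → ℝ) (E' : Finset (Edge n m)) :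
    Finset (Edge n m) := runAug (bfsCost n m) b q E'

/-- The maximum vertex-weighted b-matching mechanism using depth-first search. -/
noncomputable def MDFS (b : Fin n → ℕ) (q : Fin m → ℝ) (E' : Finset (Edge n m)) :
    Finset (Edge n m) := runAug (dfsCost n m) b q E'

/-!
Reporting exactly `Top`, agent `a₁` has edges only to the tasks of `Top`. Tasks arrive in
decreasing order of value; when a task `j` of `Top` arrives, `a₁` holds only the tasks of `Top`
seen so far, so it is unsaturated, the one-edge path `a₁ – j` is augmenting, and a search that
explores `a₁` first selects it. An augmenting path from any other task avoids `a₁`, because every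
edge of `a₁` to an already matched task is itself matched. Hence `a₁` ends with exactly `Top`.
Under any other report the output is still a b-matching of the reported edges, so `a₁` receives
at most `min b₁ |T₁|` of its own tasks, and no such set is worth more than `Top`.
-/

open Finset

theorem foldl_mul_add_eq_ofDigits_reverse (B : ℕ) (L : List ℕ) :
    L.foldl (fun a d => a * B + d) 0 = Nat.ofDigits B L.reverse := by
  induction L using List.reverseRecOn with
  | nil => simp
  | append_singleton L d ih =>
    rw [List.foldl_append, List.reverse_append, ih]
    simp [Nat.ofDigits_cons]
    ring

theorem foldl_mul_add_lt_of_head_lt {B d₁ d₂ : ℕ} {L₁ L₂ : List ℕ} (hB : 1 < B)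
    (hlen : L₁.length = L₂.length) (hd : d₁ < d₂) (hL₁ : ∀ x ∈ L₁, x < B) :
    (d₁ :: L₁).foldl (fun a d => a * B + d) 0 < (d₂ :: L₂).foldl (fun a d => a * B + d) 0 := by
  simp only [foldl_mul_add_eq_ofDigits_reverse, List.reverse_cons, Nat.ofDigits_append,
    Nat.ofDigits_singleton, List.length_reverse, ← hlen]
  have hlt : Nat.ofDigits B L₁.reverse < B ^ L₁.length := by
    simpa using Nat.ofDigits_lt_base_pow_length hB (l := L₁.reverse) (by simpa using hL₁)
  have hstep : B ^ L₁.length * (d₁ + 1) ≤ B ^ L₁.length * d₂ := Nat.mul_le_mul_left _ hd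
  rw [mul_add, mul_one] at hstep
  omega

theorem pathKey_singleton_lt_cons {i₀ i : Fin n} (j : Fin m) (t : List (Edge n m))
    (hi : i₀ < i) (ht : t.length < n) :
    pathKey n m [(i₀, j)] < pathKey n m ((i, j) :: t) := by
  unfold pathKey
  simp only [List.flatMap_cons, List.flatMap_nil, List.cons_append, List.nil_append,
    List.length_cons]
  apply foldl_mul_add_lt_of_head_lt (by omega) _ (by simpa using hi)
  · simp only [List.mem_cons, List.mem_replicate]
    rintro x (rfl | ⟨-, rfl⟩) <;> omega
  · simp [List.length_flatMap]
    omega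

def Prioritizes (cost : List (Edge n m) → ℕ) (a : Fin n) : Prop :=
  ∀ (j : Fin m) (i : Fin n) (t : List (Edge n m)), t.length < n → i ≠ a →
    cost [(a, j)] < cost ((i, j) :: t)

theorem Fin.mk_zero_lt_of_ne {hn : 0 < n} {i : Fin n} (hi : i ≠ ⟨0, hn⟩) : (⟨0, hn⟩ : Fin n) < i :=
  Fin.lt_def.2 (Nat.pos_of_ne_zero fun h => hi (Fin.ext h))

theorem prioritizes_dfsCost (hn : 0 < n) : Prioritizes (dfsCost n m) ⟨0, hn⟩ :=
  fun j _ t ht hi => pathKey_singleton_lt_cons j t (Fin.mk_zero_lt_of_ne hi) ht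

theorem prioritizes_bfsCost (hn : 0 < n) : Prioritizes (bfsCost n m) ⟨0, hn⟩ := by
  intro j i t ht hi
  unfold bfsCost
  have hlen : [((⟨0, hn⟩ : Fin n), j)].length ≤ ((i, j) :: t).length := by simp
  exact Nat.add_lt_add_of_le_of_lt (Nat.mul_le_mul_right _ hlen)
    (pathKey_singleton_lt_cons j t (Fin.mk_zero_lt_of_ne hi) ht)

section Degree

variable {μ ν : Finset (Edge n m)} {i : Fin n}

theorem deg_mono (h : μ ⊆ ν) : deg μ i ≤ deg ν i :=
  card_le_card (filter_subset_filter _ h)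

theorem deg_union_le : deg (μ ∪ ν) i ≤ deg μ i + deg ν i := by
  unfold deg
  rw [filter_union]
  exact card_union_le _ _

theorem deg_sdiff_lt {e : Edge n m} (he : e ∈ μ) (heν : e ∈ ν) (hei : e.1 = i) :
    deg (μ \ ν) i < deg μ i :=
  card_lt_card <| (ssubset_iff_of_subset (filter_subset_filter _ sdiff_subset)).2
    ⟨e, mem_filter.2 ⟨he, hei⟩, fun h => (mem_sdiff.1 (mem_filter.1 h).1).2 heν⟩

theorem deg_toFinset_le_one {p : List (Edge n m)} (hp : (p.map Prod.fst).Nodup) :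
    deg p.toFinset i ≤ 1 := by
  refine card_le_one.2 fun e he f hf => ?_
  simp only [mem_filter, List.mem_toFinset] at he hf
  exact List.inj_on_of_nodup_map hp he.1 hf.1 (he.2.trans hf.2.symm)

theorem deg_toFinset_eq_zero {p : List (Edge n m)} (hp : ∀ e ∈ p, e.1 ≠ i) :
    deg p.toFinset i = 0 := by
  refine card_eq_zero.2 (filter_eq_empty_iff.2 fun e he => ?_)
  exact hp e (List.mem_toFinset.1 he)

end Degree

theorem mem_pathMatched {p : List (Edge n m)} {e : Edge n m} :
    e ∈ pathMatched p ↔ ∃ k, ∃ h : k + 1 < p.length, e = (p[k].1, p[k + 1].2) := by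
  unfold pathMatched
  rw [List.mem_map]
  constructor
  · rintro ⟨ef, hef, rfl⟩
    obtain ⟨k, hk, rfl⟩ := List.mem_iff_getElem.1 hef
    simp only [List.length_zip, List.length_tail, lt_min_iff] at hk
    exact ⟨k, by omega, by simp⟩
  · rintro ⟨k, hk, rfl⟩
    refine ⟨(p[k], p[k + 1]), List.mem_iff_getElem.2 ⟨k, by simp; omega, by simp⟩, rfl⟩

theorem mem_applyPath {μ : Finset (Edge n m)} {p : List (Edge n m)} {e : Edge n m} :
    e ∈ applyPath μ p ↔ (e ∈ μ ∧ e ∉ pathMatched p) ∨ e ∈ p := by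
  simp [applyPath]

theorem applyPath_singleton (μ : Finset (Edge n m)) (e : Edge n m) :
    applyPath μ [e] = insert e μ := by
  ext f
  simp [applyPath, pathMatched]

namespace IsAugPathFrom

variable {b : Fin n → ℕ} {E' μ : Finset (Edge n m)} {j : Fin m} {p : List (Edge n m)}

theorem snd_getElem_zero (hp : IsAugPathFrom b E' μ j p) (h : 0 < p.length) : p[0].2 = j :=
  hp.starts _ (by simp [List.head?_eq_getElem?, List.getElem?_eq_getElem h])

theorem matched_getElem (hp : IsAugPathFrom b E' μ j p) (k : ℕ) (h : k + 1 < p.length) :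
    (p[k].1, p[k + 1].2) ∈ μ := by
  simpa using hp.matched k h

theorem deg_lt_getElem_last (hp : IsAugPathFrom b E' μ j p) {k : ℕ} (hk : k < p.length)
    (hlast : p.length ≤ k + 1) : deg μ p[k].1 < b p[k].1 :=
  hp.unsatLast _ (by rw [List.getLast?_eq_getElem?, show p.length - 1 = k by omega,
    List.getElem?_eq_getElem hk]; rfl)

theorem length_le (hp : IsAugPathFrom b E' μ j p) : p.length ≤ n := by
  simpa using hp.agentsNodup.length_le_card

theorem snd_mem (hp : IsAugPathFrom b E' μ j p) {f : Edge n m} (hf : f ∈ p) :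
    f.2 = j ∨ ∃ e ∈ μ, e.2 = f.2 := by
  obtain ⟨k, hk, rfl⟩ := List.mem_iff_getElem.1 hf
  cases k with
  | zero => exact Or.inl (hp.snd_getElem_zero hk)
  | succ k => exact Or.inr ⟨_, hp.matched_getElem k hk, rfl⟩

theorem tail_eq_nil {e : Edge n m} {t : List (Edge n m)} (hp : IsAugPathFrom b E' μ j (e :: t))
    (he : deg μ e.1 < b e.1) : t = [] := by
  cases t with
  | nil => rfl
  | cons f t =>
    have := hp.satInterior 0 (by simp)
    simp only [List.get_eq_getElem, List.getElem_cons_zero] at this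
    omega

theorem singleton {i : Fin n} (hE' : (i, j) ∈ E') (hμ : (i, j) ∉ μ) (hi : deg μ i < b i) :
    IsAugPathFrom b E' μ j [(i, j)] where
  ne := by simp
  starts := by simp
  mem := by simpa using ⟨hE', hμ⟩
  matched := by simp
  satInterior := by simp
  unsatLast := by simpa using hi
  agentsNodup := by simp
  tasksNodup := by simp

theorem fst_ne (hp : IsAugPathFrom b E' μ j p) {a : Fin n} (hj : (a, j) ∉ E')
    (ha : ∀ e ∈ E', e.1 = a → (∃ f ∈ μ, f.2 = e.2) → e ∈ μ) : ∀ e ∈ p, e.1 ≠ a := by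
  intro e he hea
  obtain ⟨heE', heμ⟩ := hp.mem e he
  rcases hp.snd_mem he with hej | hmatched
  · exact hj (by rwa [← hea, ← hej])
  · exact heμ (ha e heE' hea hmatched)

theorem applyPath_subset (hp : IsAugPathFrom b E' μ j p) (hμ : μ ⊆ E') :
    applyPath μ p ⊆ E' := by
  intro e he
  rcases mem_applyPath.1 he with ⟨he, -⟩ | he
  exacts [hμ he, (hp.mem e he).1]

theorem deg_applyPath_le (hp : IsAugPathFrom b E' μ j p) (hμ : ∀ i, deg μ i ≤ b i) (i : Fin n) :
    deg (applyPath μ p) i ≤ b i := by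
  have hsplit : deg (applyPath μ p) i ≤ deg (μ \ (pathMatched p).toFinset) i + deg p.toFinset i :=
    deg_union_le
  by_cases hi : ∃ k, ∃ hk : k < p.length, p[k].1 = i
  · obtain ⟨k, hk, rfl⟩ := hi
    have hone := deg_toFinset_le_one (i := p[k].1) hp.agentsNodup
    by_cases hlast : k + 1 < p.length
    · -- the matched edge leaving `p[k].1` is removed
      have := deg_sdiff_lt (i := p[k].1) (hp.matched_getElem k hlast)
        (List.mem_toFinset.2 (mem_pathMatched.2 ⟨k, hlast, rfl⟩)) rfl
      have := hμ p[k].1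
      omega
    · have := hp.deg_lt_getElem_last hk (by omega)
      have := deg_mono (i := p[k].1) (sdiff_subset (s := μ) (t := (pathMatched p).toFinset))
      omega
  · have hzero : deg p.toFinset i = 0 := deg_toFinset_eq_zero fun e he hei => by
      obtain ⟨k, hk, rfl⟩ := List.mem_iff_getElem.1 he
      exact hi ⟨k, hk, hei⟩
    have := deg_mono (i := i) (sdiff_subset (s := μ) (t := (pathMatched p).toFinset))
    have := hμ i
    omega

theorem snd_mem_applyPath (hp : IsAugPathFrom b E' μ j p) {s : Finset (Fin m)}
    (hμ : ∀ e ∈ μ, e.2 ∈ s) : ∀ e ∈ applyPath μ p, e.2 ∈ insert j s := by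
  intro e he
  rcases mem_applyPath.1 he with ⟨he, -⟩ | he
  · exact mem_insert_of_mem (hμ e he)
  · rcases hp.snd_mem he with hej | ⟨f, hf, hfe⟩
    · exact hej ▸ mem_insert_self _ _
    · exact mem_insert_of_mem (hfe ▸ hμ f hf)

end IsAugPathFrom

theorem filter_applyPath_of_forall_ne {μ : Finset (Edge n m)} {p : List (Edge n m)} {i : Fin n}
    (hp : ∀ e ∈ p, e.1 ≠ i) :
    (applyPath μ p).filter (fun e => e.1 = i) = μ.filter (fun e => e.1 = i) := by
  ext f
  simp only [mem_filter, mem_applyPath]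
  constructor
  · rintro ⟨⟨hf, -⟩ | hf, hfi⟩
    exacts [⟨hf, hfi⟩, absurd hfi (hp f hf)]
  · rintro ⟨hf, hfi⟩
    refine ⟨Or.inl ⟨hf, fun hM => ?_⟩, hfi⟩
    obtain ⟨k, hk, rfl⟩ := mem_pathMatched.1 hM
    exact hp _ (List.getElem_mem _) hfi

section Selection

variable {cost : List (Edge n m) → ℕ} {b : Fin n → ℕ} {E' μ : Finset (Edge n m)} {j : Fin m}

theorem isAugPathFrom_of_selectPath_eq_some {p : List (Edge n m)}
    (h : selectPath cost b E' μ j = some p) : IsAugPathFrom b E' μ j p := by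
  unfold selectPath at h
  split_ifs at h with hex
  exact Option.some_inj.1 h ▸ hex.choose_spec.1

theorem selectPath_eq_some_of_lt {p₀ : List (Edge n m)} (hp₀ : IsAugPathFrom b E' μ j p₀)
    (hlt : ∀ p, IsAugPathFrom b E' μ j p → p ≠ p₀ → cost p₀ < cost p) :
    selectPath cost b E' μ j = some p₀ := by
  have hmin : ∀ p, IsAugPathFrom b E' μ j p → cost p₀ ≤ cost p := fun p hp => by
    by_cases h : p = p₀
    · rw [h]
    · exact (hlt p hp h).le
  have hex : ∃ p, IsAugPathFrom b E' μ j p ∧ ∀ p', IsAugPathFrom b E' μ j p' → cost p ≤ cost p' :=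
    ⟨p₀, hp₀, hmin⟩
  rw [selectPath, dif_pos hex]
  by_contra hne
  have := hlt _ hex.choose_spec.1 fun h => hne (congrArg some h)
  exact absurd (hex.choose_spec.2 p₀ hp₀) (not_le.2 this)

noncomputable def augStep (cost : List (Edge n m) → ℕ) (b : Fin n → ℕ) (E' μ : Finset (Edge n m))
    (j : Fin m) : Finset (Edge n m) :=
  match selectPath cost b E' μ j with
  | some p => applyPath μ p
  | none => μ

theorem augStep_eq_or_exists :
    augStep cost b E' μ j = μ ∨
      ∃ p, IsAugPathFrom b E' μ j p ∧ augStep cost b E' μ j = applyPath μ p := by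
  unfold augStep
  cases h : selectPath cost b E' μ j with
  | none => exact Or.inl rfl
  | some p => exact Or.inr ⟨p, isAugPathFrom_of_selectPath_eq_some h, rfl⟩

theorem augStep_eq_insert {a : Fin n} (hcost : Prioritizes cost a) (hE' : (a, j) ∈ E')
    (hμ : (a, j) ∉ μ) (ha : deg μ a < b a) : augStep cost b E' μ j = insert (a, j) μ := by
  have hsel : selectPath cost b E' μ j = some [(a, j)] := by
    refine selectPath_eq_some_of_lt (.singleton hE' hμ ha) fun p hp hne => ?_
    obtain ⟨⟨i, j'⟩, t, rfl⟩ := List.exists_cons_of_ne_nil hp.ne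
    obtain rfl : j = j' := (hp.starts _ rfl).symm
    by_cases hia : i = a
    · subst hia
      exact absurd (by rw [hp.tail_eq_nil ha]) hne
    · exact hcost j i t (by simpa using hp.length_le) hia
  rw [augStep, hsel]
  exact applyPath_singleton μ _

theorem filter_augStep_of_forall_ne {a : Fin n}
    (ha : ∀ p, IsAugPathFrom b E' μ j p → ∀ e ∈ p, e.1 ≠ a) :
    (augStep cost b E' μ j).filter (fun e => e.1 = a) = μ.filter (fun e => e.1 = a) := by
  rcases augStep_eq_or_exists (cost := cost) with h | ⟨p, hp, h⟩ <;> rw [h]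
  exact filter_applyPath_of_forall_ne (ha p hp)

theorem snd_mem_augStep {s : Finset (Fin m)} (hμ : ∀ e ∈ μ, e.2 ∈ s) :
    ∀ e ∈ augStep cost b E' μ j, e.2 ∈ insert j s := by
  rcases augStep_eq_or_exists (cost := cost) with h | ⟨p, hp, h⟩ <;> rw [h]
  · exact fun e he => mem_insert_of_mem (hμ e he)
  · exact hp.snd_mem_applyPath hμ

end Selection

theorem List.foldl_induction_of_nodup {α β : Type*} [DecidableEq α] {f : β → α → β}
    {P : β → Finset α → Prop} {l : List α} {x : β} (hl : l.Nodup) (h₀ : P x ∅)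
    (hf : ∀ y s a, a ∉ s → P y s → P (f y a) (insert a s)) : P (l.foldl f x) l.toFinset := by
  induction l using List.reverseRecOn with
  | nil => simpa using h₀
  | append_singleton l a ih =>
    rw [List.nodup_append] at hl
    have hto : (l ++ [a]).toFinset = insert a l.toFinset := by
      ext
      simp
    rw [List.foldl_append, List.foldl_cons, List.foldl_nil, hto]
    exact hf _ _ _ (fun ha => hl.2.2 a (List.mem_toFinset.1 ha) a (List.mem_singleton_self a) rfl)
      (ih hl.1)

section Run

variable {cost : List (Edge n m) → ℕ} {b : Fin n → ℕ} {q : Fin m → ℝ} {E' : Finset (Edge n m)}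

theorem runAug_induction (P : Finset (Edge n m) → Finset (Fin m) → Prop) (h₀ : P ∅ ∅)
    (hstep : ∀ μ s j, j ∉ s → P μ s → P (augStep cost b E' μ j) (insert j s)) :
    P (runAug cost b q E') univ := by
  have hperm := List.perm_insertionSort (fun j k => q k ≤ q j) (List.finRange m)
  have huniv : (sortedTasks m q).toFinset = univ := by
    ext j
    simp only [List.mem_toFinset, mem_univ, iff_true]
    exact hperm.mem_iff.2 (List.mem_finRange j)
  rw [← huniv]
  -- `runAug` unfolds to the fold of `augStep` over the sorted tasks
  exact List.foldl_induction_of_nodup (hperm.nodup_iff.2 (List.nodup_finRange m)) h₀ hstep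

theorem runAug_subset : runAug cost b q E' ⊆ E' := by
  refine runAug_induction (fun μ _ => μ ⊆ E') (empty_subset _) fun μ s j _ hμ => ?_
  rcases augStep_eq_or_exists (cost := cost) (b := b) (E' := E') (μ := μ) (j := j)
    with h | ⟨p, hp, h⟩ <;> rw [h]
  exacts [hμ, hp.applyPath_subset hμ]

theorem deg_runAug_le (i : Fin n) : deg (runAug cost b q E') i ≤ b i := by
  refine runAug_induction (fun μ _ => ∀ i, deg μ i ≤ b i) (fun i => by simp [deg])
    (fun μ s j _ hμ => ?_) i
  rcases augStep_eq_or_exists (cost := cost) (b := b) (E' := E') (μ := μ) (j := j)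
    with h | ⟨p, hp, h⟩ <;> rw [h]
  exacts [hμ, hp.deg_applyPath_le hμ]

end Run

theorem Finset.sum_le_sum_of_card_le_of_forall_le {α M : Type*} [DecidableEq α] [AddCommMonoid M]
    [LinearOrder M] [AddLeftMono M] {w : α → M} {A T : Finset α} (hcard : #A ≤ #T)
    (hle : ∀ e ∈ T, ∀ f ∈ A, f ∉ T → w f ≤ w e) (hnonneg : ∀ e ∈ T, 0 ≤ w e) :
    ∑ f ∈ A, w f ≤ ∑ e ∈ T, w e := by
  rw [← sum_inter_add_sum_sdiff A T w, ← sum_inter_add_sum_sdiff T A w, inter_comm]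
  refine add_le_add le_rfl ?_
  have hcard' : #(A \ T) ≤ #(T \ A) := by
    have := card_sdiff_add_card_inter A T
    have := card_sdiff_add_card_inter T A
    rw [inter_comm] at this
    omega
  rcases (T \ A).eq_empty_or_nonempty with hTA | hTA
  · rw [hTA, card_empty, Nat.le_zero, card_eq_zero] at hcard'
    rw [hTA, hcard']
  -- exchange argument: each element of `A \ T` weighs at most the lightest one of `T \ A`
  obtain ⟨c, hc, hmin⟩ := exists_min_image (T \ A) w hTA
  obtain ⟨hcT, -⟩ := mem_sdiff.1 hc
  calc ∑ f ∈ A \ T, w f ≤ #(A \ T) • w c :=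
        sum_le_card_nsmul _ _ _ fun f hf => hle c hcT f (mem_sdiff.1 hf).1 (mem_sdiff.1 hf).2
    _ ≤ #(T \ A) • w c := nsmul_le_nsmul_left (hnonneg c hcT) hcard'
    _ ≤ ∑ e ∈ T \ A, w e := card_nsmul_le_sum _ _ _ hmin

section FirstAgent

variable {cost : List (Edge n m) → ℕ} {b : Fin n → ℕ} {q : Fin m → ℝ} {E S Top : Finset (Edge n m)}
  {a : Fin n}

theorem fst_eq_of_mem_agentEdges {e : Edge n m} (he : e ∈ agentEdges E a) : e.1 = a :=
  (mem_filter.1 he).2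

theorem subset_deviate : S ⊆ deviate E a S :=
  subset_union_right

theorem mem_of_mem_deviate {e : Edge n m} (he : e ∈ deviate E a S)
    (hea : e.1 = a) : e ∈ S := by
  rcases mem_union.1 he with he | he
  exacts [absurd hea (mem_filter.1 he).2, he]

theorem filter_runAug_deviate (hcost : Prioritizes cost a) (hTopSub : Top ⊆ agentEdges E a)
    (hTopCard : #Top ≤ b a) :
    (runAug cost b q (deviate E a Top)).filter (fun e => e.1 = a) = Top := by
  have hTopFst : ∀ e ∈ Top, e.1 = a := fun e he => fst_eq_of_mem_agentEdges (hTopSub he)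
  suffices h : (runAug cost b q (deviate E a Top)).filter (fun e => e.1 = a) =
      Top.filter (fun e => e.2 ∈ univ) by simpa using h
  refine runAug_induction (fun μ s => (∀ e ∈ μ, e.2 ∈ s) ∧
      μ.filter (fun e => e.1 = a) = Top.filter (fun e => e.2 ∈ s)) (by simp) ?_ |>.2
  rintro μ s j hj ⟨hμs, hμa⟩
  refine ⟨snd_mem_augStep hμs, ?_⟩
  by_cases hTj : (a, j) ∈ Top
  · have hdeg : deg μ a < b a :=
      calc deg μ a = #(Top.filter fun e => e.2 ∈ s) := by rw [deg, hμa]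
        _ < #Top := card_lt_card (filter_ssubset.2 ⟨(a, j), hTj, hj⟩)
        _ ≤ b a := hTopCard
    rw [augStep_eq_insert hcost (subset_deviate hTj) (fun h => hj (hμs _ h)) hdeg,
      filter_insert, if_pos rfl, hμa]
    ext f
    simp only [mem_insert, mem_filter]
    constructor
    · rintro (rfl | ⟨hf, hfs⟩)
      exacts [⟨hTj, Or.inl rfl⟩, ⟨hf, Or.inr hfs⟩]
    · rintro ⟨hf, hfj | hfs⟩
      exacts [Or.inl (Prod.ext (hTopFst f hf) hfj), Or.inr ⟨hf, hfs⟩]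
  · have havoid : ∀ p, IsAugPathFrom b (deviate E a Top) μ j p → ∀ e ∈ p, e.1 ≠ a := by
      refine fun p hp => hp.fst_ne (fun h => hTj (mem_of_mem_deviate h rfl)) ?_
      rintro e he hea ⟨f, hf, hfe⟩
      have : e ∈ μ.filter (fun e => e.1 = a) :=
        hμa ▸ mem_filter.2 ⟨mem_of_mem_deviate he hea, hfe ▸ hμs f hf⟩
      exact (mem_filter.1 this).1
    rw [filter_augStep_of_forall_ne havoid, hμa]
    refine filter_congr fun f hf => ?_
    rw [mem_insert, or_iff_right]
    intro hfj
    have : f = (a, j) := Prod.ext (hTopFst f hf) hfj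
    exact hTj (this ▸ hf)

theorem util_runAug_deviate_le (hS : S ⊆ agentEdges E a) (hq : ∀ j, 0 ≤ q j)
    (hTopCard : #Top = min (b a) #(agentEdges E a))
    (hTopBest : ∀ e ∈ Top, ∀ f ∈ agentEdges E a, f ∉ Top → q f.2 ≤ q e.2) :
    util q a (runAug cost b q (deviate E a S)) ≤ ∑ e ∈ Top, q e.2 := by
  set A := (runAug cost b q (deviate E a S)).filter (fun e => e.1 = a)
  have hA : A ⊆ agentEdges E a := fun e he =>
    hS (mem_of_mem_deviate (runAug_subset (mem_filter.1 he).1) (mem_filter.1 he).2)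
  have hcard : #A ≤ #Top := hTopCard ▸ le_min (deg_runAug_le a) (card_le_card hA)
  exact sum_le_sum_of_card_le_of_forall_le hcard (fun e he f hf => hTopBest e he f (hA hf))
    fun e _ => hq e.2

theorem runAug_deviate_top (hcost : Prioritizes cost a) (hq : ∀ j, 0 ≤ q j)
    (hTopSub : Top ⊆ agentEdges E a) (hTopCard : #Top = min (b a) #(agentEdges E a))
    (hTopBest : ∀ e ∈ Top, ∀ f ∈ agentEdges E a, f ∉ Top → q f.2 ≤ q e.2) :
    (runAug cost b q (deviate E a Top)).filter (fun e => e.1 = a) = Top ∧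
      ∀ S, ValidReport E a S →
        util q a (runAug cost b q (deviate E a S)) ≤
          util q a (runAug cost b q (deviate E a Top)) := by
  have hfilter := filter_runAug_deviate (q := q) hcost hTopSub (hTopCard ▸ min_le_left _ _)
  refine ⟨hfilter, fun S hS => ?_⟩
  unfold util
  rw [hfilter]
  exact util_runAug_deviate_le hS.1 hq hTopCard hTopBest

end FirstAgent

theorem first_agent_best_strategy_general (n m : ℕ) (hn : 0 < n) (b : Fin n → ℕ) (q : Fin m → ℝ)
    (hq : ∀ j, 0 < q j) (E : Finset (Edge n m)) (a₁ : Fin n) (ha₁ : a₁ = ⟨0, hn⟩)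
    (Top : Finset (Edge n m))
    (hTopSub : Top ⊆ agentEdges E a₁)
    (hTopCard : Top.card = min (b a₁) (agentEdges E a₁).card)
    (hTopBest : ∀ e ∈ Top, ∀ f ∈ agentEdges E a₁, f ∉ Top → q f.2 ≤ q e.2) :
    ((MBFS b q (deviate E a₁ Top)).filter (fun e => e.1 = a₁) = Top ∧
      ∀ S, ValidReport E a₁ S →
        util q a₁ (MBFS b q (deviate E a₁ S)) ≤ util q a₁ (MBFS b q (deviate E a₁ Top))) ∧
    ((MDFS b q (deviate E a₁ Top)).filter (fun e => e.1 = a₁) = Top ∧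
      ∀ S, ValidReport E a₁ S →
        util q a₁ (MDFS b q (deviate E a₁ S)) ≤ util q a₁ (MDFS b q (deviate E a₁ Top))) := by
  subst ha₁
  have hq' : ∀ j, 0 ≤ q j := fun j => (hq j).le
  exact ⟨runAug_deviate_top (prioritizes_bfsCost hn) hq' hTopSub hTopCard hTopBest,
    runAug_deviate_top (prioritizes_dfsCost hn) hq' hTopSub hTopCard hTopBest⟩

/-- For both `M_BFS` and `M_DFS`, the first agent's optimal strategy is to
report exactly the edges to its `b a₁` highest-valued incident tasks: if `Top` is such a set
of edges (of cardinality `min (b a₁) |T₁|`, all its tasks at least as valuable as any other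
incident task), then reporting `Top` makes the mechanism assign agent `a₁` precisely the
edges of `Top`, and no other report gives `a₁` a larger utility. -/
theorem first_agent_best_strategy (n m : ℕ) (hn : 0 < n) (b : Fin n → ℕ) (q : Fin m → ℝ)
    (hq : ∀ j, 0 < q j) (E : Finset (Edge n m)) (a₁ : Fin n) (ha₁ : a₁ = ⟨0, hn⟩)
    (hne : (agentEdges E a₁).Nonempty) (Top : Finset (Edge n m))
    (hTopSub : Top ⊆ agentEdges E a₁)
    (hTopCard : Top.card = min (b a₁) (agentEdges E a₁).card)
    (hTopBest : ∀ e ∈ Top, ∀ f ∈ agentEdges E a₁, f ∉ Top → q f.2 ≤ q e.2) :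
    ((MBFS b q (deviate E a₁ Top)).filter (fun e => e.1 = a₁) = Top ∧
      ∀ S, ValidReport E a₁ S →
        util q a₁ (MBFS b q (deviate E a₁ S)) ≤ util q a₁ (MBFS b q (deviate E a₁ Top))) ∧
    ((MDFS b q (deviate E a₁ Top)).filter (fun e => e.1 = a₁) = Top ∧
      ∀ S, ValidReport E a₁ S →
        util q a₁ (MDFS b q (deviate E a₁ S)) ≤ util q a₁ (MDFS b q (deviate E a₁ Top))) :=
  first_agent_best_strategy_general n m hn b q hq E a₁ ha₁ Top hTopSub hTopCard hTopBest
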